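/- Let T be a triangulated category satisfying the octahedral axiom, with shift functor Σ, and let P be a connective class of objects closed under isomorphisms and finite direct sums and containing 0. Set V_n := P ∗ ΣP ∗ ⋯ ∗ Σ^n P. Then for every distinguished triangle X → Y → Z → ΣX with X ∈ V_n and Y ∈ V_n, one has Z ∈ V_{n+1}. -/

import Mathlib

/-!
Statement 1: In a triangulated category `C` (satisfying the octahedral axiom) with a
connective class of objects `P` (closed under isomorphisms, finite direct sums, containing 0),
for a distinguished triangle `X ⟶ Y ⟶ Z ⟶ ΣX` with `X, Y ∈ V n = P ∗ ΣP ∗ ⋯ ∗ Σⁿ P`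
one has `Z ∈ V (n+1)`.
-/

open CategoryTheory Limits Pretriangulated

universe v u

namespace AuslanderIyamaStmt1

variable {C : Type u} [Category.{v} C] [HasZeroObject C] [HasShift C ℤ] [Preadditive C]
  [∀ n : ℤ, (shiftFunctor C n).Additive] [Pretriangulated C] [HasBinaryBiproducts C]

/-- `S₁ ∗ S₂`: objects `Y` fitting in a distinguished triangle `X ⟶ Y ⟶ Z ⟶ X⟦1⟧`
with `X ∈ S₁` and `Z ∈ S₂`. -/
def star (S₁ S₂ : Set C) : Set C :=
  {Y | ∃ (X Z : C) (f : X ⟶ Y) (g : Y ⟶ Z) (h : Z ⟶ X⟦(1 : ℤ)⟧),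
    (Triangle.mk f g h ∈ distTriang C) ∧ X ∈ S₁ ∧ Z ∈ S₂}

/-- `Σⁿ S`, closed under isomorphism. -/
def shiftSet (n : ℤ) (S : Set C) : Set C :=
  {X | ∃ Y ∈ S, Nonempty (X ≅ Y⟦n⟧)}

/-- `V n = P ∗ ΣP ∗ ⋯ ∗ Σⁿ P` (associated to the left; by the octahedral axiom `∗` is
associative so the grouping is irrelevant). -/
def V (P : Set C) : ℕ → Set C
  | 0 => P
  | n + 1 => star (V P n) (shiftSet ((n : ℤ) + 1) P)

/-
Rotating the triangle puts `Z` in `V n ∗ Σ (V n)`. Connectivity kills every morphism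
`Σᵇ P ⟶ Σ(Σᵃ P)` with `b ≤ a`, so such extensions split: `Σᵃ P ∗ Σᵇ P ⊆ Σᵇ P ∗ Σᵃ P`, and
`Σᵃ P ∗ Σᵃ P ⊆ Σᵃ P` by closure under sums. Together with associativity of `∗` this moves
any `Σᵏ P` with `k ≤ n` leftwards into `V n`, so `V n ∗ Σᵏ P ⊆ V n`, hence `V n ∗ Σ (V m) ⊆ V n`
for `m < n`; finally `V n ∗ Σ (V n) ⊆ (V n ∗ Σ (V (n-1))) ∗ Σⁿ⁺¹ P ⊆ V n ∗ Σⁿ⁺¹ P = V (n+1)`.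
-/

set_option linter.unusedSectionVars false

section Pretriangulated

variable {S S₁ S₂ : Set C}

lemma star_mono {S₁' S₂' : Set C} (h₁ : S₁ ⊆ S₁') (h₂ : S₂ ⊆ S₂') :
    star S₁ S₂ ⊆ star S₁' S₂' :=
  fun _ ⟨X, Z, f, g, h, hT, hX, hZ⟩ => ⟨X, Z, f, g, h, hT, h₁ hX, h₂ hZ⟩

lemma mem_star_of_iso {A B : C} (e : A ≅ B) (hA : A ∈ star S₁ S₂) : B ∈ star S₁ S₂ :=
  let ⟨X, Z, f, g, h, hT, hX, hZ⟩ := hA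
  ⟨X, Z, f ≫ e.hom, e.inv ≫ g, h,
    isomorphic_distinguished _ hT _ (Triangle.isoMk _ _ (Iso.refl _) e.symm (Iso.refl _)
      (by simp [Triangle.mk]) (by simp [Triangle.mk]) (by simp [Triangle.mk])), hX, hZ⟩

lemma star_assoc [IsTriangulated C] (S₁ S₂ S₃ : Set C) :
    star (star S₁ S₂) S₃ = star S₁ (star S₂ S₃) :=
  ObjectProperty.extensionProduct_assoc S₁ S₂ S₃

lemma mem_shiftSet_of_iso {a : ℤ} {A B : C} (e : A ≅ B) (hA : A ∈ shiftSet a S) :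
    B ∈ shiftSet a S := by
  obtain ⟨Y, hY, ⟨e'⟩⟩ := hA
  exact ⟨Y, hY, ⟨e.symm ≪≫ e'⟩⟩

lemma shift_mem_shiftSet {a : ℤ} {A : C} (hA : A ∈ shiftSet a S) (b : ℤ) :
    A⟦b⟧ ∈ shiftSet (a + b) S := by
  obtain ⟨Y, hY, ⟨e⟩⟩ := hA
  exact ⟨Y, hY, ⟨(shiftFunctor C b).mapIso e ≪≫ (shiftFunctorAdd' C a b (a + b) rfl).symm.app Y⟩⟩

lemma shiftSet_shiftSet_subset (a b : ℤ) : shiftSet b (shiftSet a S) ⊆ shiftSet (a + b) S :=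
  fun _ ⟨_, hY, ⟨e⟩⟩ => mem_shiftSet_of_iso e.symm (shift_mem_shiftSet hY b)

lemma shiftSet_zero (hS : ∀ ⦃X Y : C⦄, (X ≅ Y) → X ∈ S → Y ∈ S) : shiftSet 0 S = S := by
  ext X
  constructor
  · rintro ⟨Y, hY, ⟨e⟩⟩
    exact hS ((shiftFunctorZero C ℤ).symm.app Y ≪≫ e.symm) hY
  · exact fun hX => ⟨X, hX, ⟨(shiftFunctorZero C ℤ).symm.app X⟩⟩

lemma shiftSet_star_subset (a : ℤ) :
    shiftSet a (star S₁ S₂) ⊆ star (shiftSet a S₁) (shiftSet a S₂) := by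
  rintro W ⟨Y, ⟨X, Z, f, g, h, hT, hX, hZ⟩, ⟨e⟩⟩
  exact mem_star_of_iso e.symm ⟨_, _, _, _, _, Triangle.shift_distinguished _ hT a,
    ⟨X, hX, ⟨Iso.refl _⟩⟩, ⟨Z, hZ, ⟨Iso.refl _⟩⟩⟩

lemma exists_iso_biprod_of_mem_star
    (hvan : ∀ A ∈ S₁, ∀ B ∈ S₂, ∀ φ : B ⟶ A⟦(1 : ℤ)⟧, φ = 0) {W : C} (hW : W ∈ star S₁ S₂) :
    ∃ A ∈ S₁, ∃ B ∈ S₂, Nonempty (W ≅ A ⊞ B) := by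
  obtain ⟨A, B, f, g, h, hT, hA, hB⟩ := hW
  obtain ⟨e, -, -⟩ := exists_iso_binaryBiproduct_of_distTriang _ hT (hvan A hA B hB h)
  exact ⟨A, hA, B, hB, ⟨e⟩⟩

lemma star_subset_star_swap (hvan : ∀ A ∈ S₁, ∀ B ∈ S₂, ∀ φ : B ⟶ A⟦(1 : ℤ)⟧, φ = 0) :
    star S₁ S₂ ⊆ star S₂ S₁ := by
  intro W hW
  obtain ⟨A, hA, B, hB, ⟨e⟩⟩ := exists_iso_biprod_of_mem_star hvan hW
  exact mem_star_of_iso (biprod.braiding B A ≪≫ e.symm)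
    ⟨B, A, _, _, _, binaryBiproductTriangle_distinguished B A, hB, hA⟩

end Pretriangulated

lemma shiftSet_one_V_succ_subset (P : Set C) (m : ℕ) :
    shiftSet 1 (V P (m + 1)) ⊆ star (shiftSet 1 (V P m)) (shiftSet (((m + 1 : ℕ) : ℤ) + 1) P) :=
  (shiftSet_star_subset 1).trans
    (star_mono subset_rfl (by rw [Nat.cast_succ]; exact shiftSet_shiftSet_subset _ 1))

section Connective

variable (P : Set C)
  (hPconn : ∀ ⦃X Y : C⦄, X ∈ P → Y ∈ P → ∀ n : ℤ, 1 ≤ n → ∀ f : X ⟶ Y⟦n⟧, f = 0)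
include hPconn

lemma shiftSet_hom_eq_zero {a b : ℤ} (hab : a < b) {A B : C} (hA : A ∈ shiftSet a P)
    (hB : B ∈ shiftSet b P) (φ : A ⟶ B) : φ = 0 := by
  obtain ⟨P₁, hP₁, ⟨eA⟩⟩ := hA
  obtain ⟨P₀, hP₀, ⟨eB⟩⟩ := hB
  let eB' : B ≅ (P₀⟦b - a⟧)⟦a⟧ := eB ≪≫ (shiftFunctorAdd' C (b - a) a b (by ring)).app P₀
  obtain ⟨χ, hχ⟩ := (shiftFunctor C a).map_surjective (eA.inv ≫ φ ≫ eB'.hom)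
  rw [hPconn hP₁ hP₀ (b - a) (by omega) χ, Functor.map_zero] at hχ
  simpa using congrArg (fun ψ => eA.hom ≫ ψ ≫ eB'.inv) hχ.symm

lemma hom_shift_one_eq_zero {a b : ℤ} (hab : a ≤ b) :
    ∀ A ∈ shiftSet b P, ∀ B ∈ shiftSet a P, ∀ φ : B ⟶ A⟦(1 : ℤ)⟧, φ = 0 :=
  fun _ hA _ hB => shiftSet_hom_eq_zero P hPconn (by omega) hB (shift_mem_shiftSet hA 1)

lemma star_shiftSet_subset_swap {a b : ℤ} (hab : a ≤ b) :
    star (shiftSet b P) (shiftSet a P) ⊆ star (shiftSet a P) (shiftSet b P) :=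
  star_subset_star_swap (hom_shift_one_eq_zero P hPconn hab)

lemma star_shiftSet_self_subset (hPsum : ∀ ⦃X Y : C⦄, X ∈ P → Y ∈ P → (X ⊞ Y) ∈ P) (a : ℤ) :
    star (shiftSet a P) (shiftSet a P) ⊆ shiftSet a P := by
  intro W hW
  obtain ⟨A, ⟨P₀, hP₀, ⟨e₀⟩⟩, B, ⟨P₁, hP₁, ⟨e₁⟩⟩, ⟨e⟩⟩ :=
    exists_iso_biprod_of_mem_star (hom_shift_one_eq_zero P hPconn le_rfl) hW
  have : PreservesBinaryBiproduct P₀ P₁ (shiftFunctor C a) :=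
    preservesBinaryBiproduct_of_preservesBiproduct _ _ _
  exact ⟨P₀ ⊞ P₁, hPsum hP₀ hP₁,
    ⟨e ≪≫ biprod.mapIso e₀ e₁ ≪≫ ((shiftFunctor C a).mapBiprod P₀ P₁).symm⟩⟩

variable (hPiso : ∀ ⦃X Y : C⦄, (X ≅ Y) → X ∈ P → Y ∈ P)
  (hPsum : ∀ ⦃X Y : C⦄, X ∈ P → Y ∈ P → (X ⊞ Y) ∈ P)
include hPiso hPsum

variable [IsTriangulated C]

lemma star_V_shiftSet_subset_V (n k : ℕ) (hk : k ≤ n) : star (V P n) (shiftSet k P) ⊆ V P n := by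
  induction n generalizing k with
  | zero =>
    obtain rfl : k = 0 := by omega
    calc star (V P 0) (shiftSet ((0 : ℕ) : ℤ) P) = star (shiftSet 0 P) (shiftSet 0 P) := by
          rw [Nat.cast_zero, shiftSet_zero hPiso]; rfl
      _ ⊆ shiftSet 0 P := star_shiftSet_self_subset P hPconn hPsum 0
      _ = V P 0 := shiftSet_zero hPiso
  | succ n ih =>
    change star (star (V P n) _) _ ⊆ star (V P n) _
    rw [star_assoc]
    rcases Nat.lt_or_ge k (n + 1) with hlt | hge
    · calc star (V P n) (star (shiftSet ((n : ℤ) + 1) P) (shiftSet k P))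
          ⊆ star (V P n) (star (shiftSet k P) (shiftSet ((n : ℤ) + 1) P)) :=
            star_mono subset_rfl (star_shiftSet_subset_swap P hPconn (by omega))
        _ = star (star (V P n) (shiftSet k P)) (shiftSet ((n : ℤ) + 1) P) :=
            (star_assoc _ _ _).symm
        _ ⊆ star (V P n) (shiftSet ((n : ℤ) + 1) P) := star_mono (ih k (by omega)) subset_rfl
    · obtain rfl : k = n + 1 := by omega
      rw [Nat.cast_succ]
      exact star_mono subset_rfl (star_shiftSet_self_subset P hPconn hPsum _)

lemma star_V_shift_one_V_subset_V {m n : ℕ} (hmn : m < n) :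
    star (V P n) (shiftSet 1 (V P m)) ⊆ V P n := by
  induction m with
  | zero => exact_mod_cast star_V_shiftSet_subset_V P hPconn hPiso hPsum n 1 hmn
  | succ m ih =>
    calc star (V P n) (shiftSet 1 (V P (m + 1)))
        ⊆ star (V P n) (star (shiftSet 1 (V P m)) (shiftSet (((m + 1 : ℕ) : ℤ) + 1) P)) :=
          star_mono subset_rfl (shiftSet_one_V_succ_subset P m)
      _ = star (star (V P n) (shiftSet 1 (V P m))) (shiftSet (((m + 1 : ℕ) : ℤ) + 1) P) :=
          (star_assoc _ _ _).symm
      _ ⊆ star (V P n) (shiftSet ((m + 2 : ℕ) : ℤ) P) :=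
          star_mono (ih (by omega))
            (by rw [show ((m + 1 : ℕ) : ℤ) + 1 = ((m + 2 : ℕ) : ℤ) by push_cast; ring])
      _ ⊆ V P n := star_V_shiftSet_subset_V P hPconn hPiso hPsum n (m + 2) (by omega)

lemma star_V_shift_one_V_subset_V_succ (n : ℕ) :
    star (V P n) (shiftSet 1 (V P n)) ⊆ V P (n + 1) := by
  cases n with
  | zero =>
    change _ ⊆ star P (shiftSet (((0 : ℕ) : ℤ) + 1) P)
    rw [Nat.cast_zero, zero_add]
    rfl
  | succ m =>
    calc star (V P (m + 1)) (shiftSet 1 (V P (m + 1)))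
        ⊆ star (V P (m + 1)) (star (shiftSet 1 (V P m)) (shiftSet (((m + 1 : ℕ) : ℤ) + 1) P)) :=
          star_mono subset_rfl (shiftSet_one_V_succ_subset P m)
      _ = star (star (V P (m + 1)) (shiftSet 1 (V P m))) (shiftSet (((m + 1 : ℕ) : ℤ) + 1) P) :=
          (star_assoc _ _ _).symm
      _ ⊆ V P (m + 2) :=
          star_mono (star_V_shift_one_V_subset_V P hPconn hPiso hPsum (by omega)) subset_rfl

end Connective

theorem statement1_general [IsTriangulated C] (P : Set C)
    (hPiso : ∀ ⦃X Y : C⦄, (X ≅ Y) → X ∈ P → Y ∈ P)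
    (hPsum : ∀ ⦃X Y : C⦄, X ∈ P → Y ∈ P → (X ⊞ Y) ∈ P)
    (hPconn : ∀ ⦃X Y : C⦄, X ∈ P → Y ∈ P → ∀ n : ℤ, 1 ≤ n → ∀ f : X ⟶ Y⟦n⟧, f = 0)
    (n : ℕ) {X Y Z : C} (f : X ⟶ Y) (g : Y ⟶ Z) (h : Z ⟶ X⟦(1 : ℤ)⟧)
    (hT : Triangle.mk f g h ∈ distTriang C)
    (hX : X ∈ V P n) (hY : Y ∈ V P n) :
    Z ∈ V P (n + 1) :=
  star_V_shift_one_V_subset_V_succ P hPconn hPiso hPsum n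
    ⟨Y, X⟦(1 : ℤ)⟧, g, h, -f⟦(1 : ℤ)⟧', rot_of_distTriang _ hT, hY, ⟨X, hX, ⟨Iso.refl _⟩⟩⟩

theorem statement1 [IsTriangulated C] (P : Set C)
    (hPiso : ∀ ⦃X Y : C⦄, (X ≅ Y) → X ∈ P → Y ∈ P)
    (hPsum : ∀ ⦃X Y : C⦄, X ∈ P → Y ∈ P → (X ⊞ Y) ∈ P)
    (hPzero : ∀ ⦃X : C⦄, IsZero X → X ∈ P)
    (hPconn : ∀ ⦃X Y : C⦄, X ∈ P → Y ∈ P → ∀ n : ℤ, 1 ≤ n → ∀ f : X ⟶ Y⟦n⟧, f = 0)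
    (n : ℕ) {X Y Z : C} (f : X ⟶ Y) (g : Y ⟶ Z) (h : Z ⟶ X⟦(1 : ℤ)⟧)
    (hT : Triangle.mk f g h ∈ distTriang C)
    (hX : X ∈ V P n) (hY : Y ∈ V P n) :
    Z ∈ V P (n + 1) :=
  statement1_general P hPiso hPsum hPconn n f g h hT hX hY

end AuslanderIyamaStmt1
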